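/- (Lower bound on the real part of the propagator product, used in the ill-posedness argument.) Let m ≥ 0 and 0 < ε ≤ 1/10. There exist constants c > 0 and Λ ≥ 1 such that for all λ ≥ Λ, all ξ, η ∈ ℝ³ with λ ≤ |ξ| ≤ 2λ and λ ≤ |η| ≤ 2λ, and all t, τ ∈ ℝ with |t| ≤ ε/λ and |τ| ≤ ε/λ, the (1,1) entry of the 4×4 matrix Uₘ(τ,ξ) · β · Uₘ(t,η) has real part at least c: Re [Uₘ(τ,ξ) β Uₘ(t,η)]₁₁ ≥ c. -/

import Mathlib

noncomputable section
open Matrix Complex MeasureTheory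

/-- ℝ³ with the Euclidean norm. -/
abbrev E3 := EuclideanSpace ℝ (Fin 3)

/-- The Dirac matrix β = [[I₂,0],[0,−I₂]]. -/
def diracBeta : Matrix (Fin 4) (Fin 4) ℂ :=
  !![1,0,0,0; 0,1,0,0; 0,0,-1,0; 0,0,0,-1]

/-- The Dirac matrices αʲ = [[0,σʲ],[σʲ,0]] built from the Pauli matrices. -/
def diracAlpha : Fin 3 → Matrix (Fin 4) (Fin 4) ℂ :=
  ![!![0,0,0,1; 0,0,1,0; 0,1,0,0; 1,0,0,0],
    !![0,0,0,-Complex.I; 0,0,Complex.I,0; 0,-Complex.I,0,0; Complex.I,0,0,0],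
    !![0,0,1,0; 0,0,0,-1; 1,0,0,0; 0,-1,0,0]]

/-- ξ·α = ξ₁α¹ + ξ₂α² + ξ₃α³. -/
def xiAlpha (ξ : E3) : Matrix (Fin 4) (Fin 4) ℂ := ∑ j, (ξ j : ℂ) • diracAlpha j

/-- The Dirac symbol ξ·α + mβ. -/
def diracSym (m : ℝ) (ξ : E3) : Matrix (Fin 4) (Fin 4) ℂ :=
  xiAlpha ξ + (m : ℂ) • diracBeta

/-- ⟨ξ⟩ₘ = (m² + |ξ|²)^(1/2). -/
def bracket (m : ℝ) (ξ : E3) : ℝ := Real.sqrt (m ^ 2 + ‖ξ‖ ^ 2)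

/-- The projection Π_θᵐ(ξ) = (1/2)[I₄ + θ⟨ξ⟩ₘ⁻¹(ξ·α + mβ)], for θ = ±1. -/
def proj (m θ : ℝ) (ξ : E3) : Matrix (Fin 4) (Fin 4) ℂ :=
  (1/2 : ℂ) • ((1 : Matrix (Fin 4) (Fin 4) ℂ)
    + ((θ : ℂ) * ((bracket m ξ : ℝ) : ℂ)⁻¹) • diracSym m ξ)

/-- The propagator symbol Uₘ(t,ξ) = cos(t⟨ξ⟩ₘ)·I₄ − i⟨ξ⟩ₘ⁻¹ sin(t⟨ξ⟩ₘ)·(ξ·α + mβ). -/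
def Uprop (m t : ℝ) (ξ : E3) : Matrix (Fin 4) (Fin 4) ℂ :=
  ((Real.cos (t * bracket m ξ) : ℝ) : ℂ) • (1 : Matrix (Fin 4) (Fin 4) ℂ) -
    (Complex.I * ((bracket m ξ : ℝ) : ℂ)⁻¹ * ((Real.sin (t * bracket m ξ) : ℝ) : ℂ))
      • diracSym m ξ

/-!
Writing `A = τ⟨ξ⟩ₘ`, `B = t⟨η⟩ₘ`, the real part of the entry is `cos A cos B + r sin A sin B`
with `r = (ξ·η − m²) / (⟨ξ⟩ₘ⟨η⟩ₘ)`. Cauchy–Schwarz gives `|r| ≤ 1`, so the entry is a convex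
combination of `cos (A + B)` and `cos (A − B)`. Both are close to `1`: once `λ ≥ |m|`,
`⟨ξ⟩ₘ ≤ |m| + |ξ| ≤ 3λ`, so the phases satisfy `|A|, |B| ≤ 3ε`.
-/

lemma Uprop_mul_diracBeta_mul_Uprop_apply_zero_zero_re (m τ t : ℝ) (ξ η : E3) :
    ((Uprop m τ ξ * diracBeta * Uprop m t η) 0 0).re =
      Real.cos (τ * bracket m ξ) * Real.cos (t * bracket m η) +
        (inner ℝ ξ η - m ^ 2) / (bracket m ξ * bracket m η) *
          Real.sin (τ * bracket m ξ) * Real.sin (t * bracket m η) := by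
  simp [Uprop, diracSym, xiAlpha, diracBeta, diracAlpha, Matrix.mul_apply,
    Fin.sum_univ_four, Fin.sum_univ_three, Matrix.smul_apply,
    Matrix.one_apply, Matrix.vecHead, Matrix.vecTail, PiLp.inner_apply,
    -Complex.ofReal_cos, -Complex.ofReal_sin]
  ring

lemma bracket_nonneg (m : ℝ) (ξ : E3) : 0 ≤ bracket m ξ :=
  Real.sqrt_nonneg _

lemma bracket_le_abs_add_norm (m : ℝ) (ξ : E3) : bracket m ξ ≤ |m| + ‖ξ‖ :=
  Real.sqrt_le_iff.2 ⟨by positivity, by nlinarith [sq_abs m, abs_nonneg m, norm_nonneg ξ]⟩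

lemma sq_add_mul_le_sqrt_mul_sqrt (m a b : ℝ) :
    m ^ 2 + a * b ≤ Real.sqrt (m ^ 2 + a ^ 2) * Real.sqrt (m ^ 2 + b ^ 2) := by
  rw [← Real.sqrt_mul (by positivity)]
  exact Real.le_sqrt_of_sq_le (by nlinarith [sq_nonneg (m * (a - b))])

lemma abs_inner_sub_sq_le_bracket_mul (m : ℝ) (ξ η : E3) :
    |inner ℝ ξ η - m ^ 2| ≤ bracket m ξ * bracket m η :=
  calc |inner ℝ ξ η - m ^ 2| ≤ |inner ℝ ξ η| + |m ^ 2| := abs_sub _ _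
    _ ≤ m ^ 2 + ‖ξ‖ * ‖η‖ := by
        rw [abs_of_nonneg (sq_nonneg m), add_comm]
        gcongr
        exact abs_real_inner_le_norm ξ η
    _ ≤ bracket m ξ * bracket m η := sq_add_mul_le_sqrt_mul_sqrt m ‖ξ‖ ‖η‖

lemma abs_mul_bracket_le {m lam ε τ : ℝ} {ξ : E3} (hlam : 0 < lam) (hm : |m| ≤ lam)
    (hξ : ‖ξ‖ ≤ 2 * lam) (hτ : |τ| ≤ ε / lam) : |τ * bracket m ξ| ≤ 3 * ε :=
  calc |τ * bracket m ξ| = |τ| * bracket m ξ := by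
        rw [abs_mul, abs_of_nonneg (bracket_nonneg m ξ)]
    _ ≤ ε / lam * (3 * lam) :=
        mul_le_mul hτ (by linarith [bracket_le_abs_add_norm m ξ]) (bracket_nonneg m ξ)
          ((abs_nonneg τ).trans hτ)
    _ = 3 * ε := by field_simp

lemma one_sub_sq_div_two_le_cos_mul_cos_add_mul_sin_mul_sin {r : ℝ} (hr : |r| ≤ 1) (A B : ℝ) :
    1 - (|A| + |B|) ^ 2 / 2 ≤ Real.cos A * Real.cos B + r * Real.sin A * Real.sin B := by
  have hsub := Real.one_sub_sq_div_two_le_cos (x := A - B)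
  have hadd := Real.one_sub_sq_div_two_le_cos (x := A + B)
  rw [Real.cos_sub] at hsub
  rw [Real.cos_add] at hadd
  have hsub_sq : (A - B) ^ 2 ≤ (|A| + |B|) ^ 2 := by
    rw [← sq_abs (A - B)]; gcongr; exact abs_sub _ _
  have hadd_sq : (A + B) ^ 2 ≤ (|A| + |B|) ^ 2 := by
    rw [← sq_abs (A + B)]; gcongr; exact abs_add_le _ _
  obtain ⟨hr₁, hr₂⟩ := abs_le.1 hr
  nlinarith [mul_le_mul_of_nonneg_left hsub (by linarith : (0 : ℝ) ≤ 1 + r),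
    mul_le_mul_of_nonneg_left hadd (by linarith : (0 : ℝ) ≤ 1 - r)]

theorem propagator_product_re_lower_bound_general (m : ℝ)
    (ε : ℝ) (hε' : ε ≤ 1 / 10) :
    ∃ c > (0 : ℝ), ∃ Λ : ℝ, 1 ≤ Λ ∧
      ∀ lam : ℝ, Λ ≤ lam → ∀ ξ η : E3,
        lam ≤ ‖ξ‖ → ‖ξ‖ ≤ 2 * lam → lam ≤ ‖η‖ → ‖η‖ ≤ 2 * lam →
        ∀ t τ : ℝ, |t| ≤ ε / lam → |τ| ≤ ε / lam →
        c ≤ ((Uprop m τ ξ * diracBeta * Uprop m t η) 0 0).re := by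
  refine ⟨1 / 2, by norm_num, max 1 |m|, le_max_left _ _, ?_⟩
  intro lam hlam ξ η _ hξ _ hη t τ ht hτ
  have hlam_pos : 0 < lam := by linarith [le_max_left 1 |m|]
  have hm : |m| ≤ lam := (le_max_right _ _).trans hlam
  have hA := abs_mul_bracket_le hlam_pos hm hξ hτ
  have hB := abs_mul_bracket_le hlam_pos hm hη ht
  have hr : |(inner ℝ ξ η - m ^ 2) / (bracket m ξ * bracket m η)| ≤ 1 := by
    rw [abs_div]
    exact div_le_one_of_le₀ ((abs_inner_sub_sq_le_bracket_mul m ξ η).trans (le_abs_self _))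
      (abs_nonneg _)
  rw [Uprop_mul_diracBeta_mul_Uprop_apply_zero_zero_re]
  refine le_trans ?_ (one_sub_sq_div_two_le_cos_mul_cos_add_mul_sin_mul_sin hr _ _)
  nlinarith [abs_nonneg (τ * bracket m ξ), abs_nonneg (t * bracket m η)]

/-- lower bound on the real part of [Uₘ(τ,ξ) β Uₘ(t,η)]₁₁ for
frequencies of size λ and times of size ≤ ε/λ. -/
theorem propagator_product_re_lower_bound (m : ℝ) (hm : 0 ≤ m)
    (ε : ℝ) (hε : 0 < ε) (hε' : ε ≤ 1 / 10) :
    ∃ c > (0 : ℝ), ∃ Λ : ℝ, 1 ≤ Λ ∧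
      ∀ lam : ℝ, Λ ≤ lam → ∀ ξ η : E3,
        lam ≤ ‖ξ‖ → ‖ξ‖ ≤ 2 * lam → lam ≤ ‖η‖ → ‖η‖ ≤ 2 * lam →
        ∀ t τ : ℝ, |t| ≤ ε / lam → |τ| ≤ ε / lam →
        c ≤ ((Uprop m τ ξ * diracBeta * Uprop m t η) 0 0).re :=
  propagator_product_re_lower_bound_general m ε hε'
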